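/- Let n ≥ 1. If G is a finite simple graph in which every vertex has degree 3 or degree 6, with exactly 2n + 2 vertices of degree 3 and exactly n − 1 vertices of degree 6 (as in the chain silicate network CS_n), then the second multiplicative Zagreb index satisfies Π₂(G) = 2^{6n − 6} · 3^{12n}. -/

import Mathlib

open Finset

variable {V : Type*}

/-- The first multiplicative Zagreb index with real parameter `c`:
`Π_{1,c}(G) = ∏_{v ∈ V(G)} d(v)^c`, real powers taken in `ℝ`. -/
noncomputable def mulZagreb1 [Fintype V] (G : SimpleGraph V) [DecidableRel G.Adj] (c : ℝ) : ℝ :=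
  ∏ v : V, (G.degree v : ℝ) ^ c

/-- The second multiplicative Zagreb index: `Π₂(G) = ∏_{uv ∈ E(G)} d(u)·d(v)`. -/
def mulZagreb2 [Fintype V] (G : SimpleGraph V) [DecidableRel G.Adj] : ℕ :=
  ∏ e ∈ G.edgeFinset,
    Sym2.lift ⟨fun u v => G.degree u * G.degree v, fun _ _ => mul_comm _ _⟩ e

/-- The general sum-connectivity index with real parameter `α`:
`χ_α(G) = Σ_{uv ∈ E(G)} (d(u) + d(v))^α`, real powers. -/
noncomputable def sumConn [Fintype V] (G : SimpleGraph V) [DecidableRel G.Adj] (α : ℝ) : ℝ :=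
  ∑ e ∈ G.edgeFinset,
    Sym2.lift ⟨fun u v => ((G.degree u : ℝ) + (G.degree v : ℝ)) ^ α,
      fun u v => by dsimp only; rw [add_comm ((G.degree u : ℝ))]⟩ e

/-- The multiplicative version of the ordinary first Zagreb index:
`Π₁*(G) = ∏_{uv ∈ E(G)} (d(u) + d(v))`. -/
def mulZagrebStar [Fintype V] (G : SimpleGraph V) [DecidableRel G.Adj] : ℕ :=
  ∏ e ∈ G.edgeFinset,
    Sym2.lift ⟨fun u v => G.degree u + G.degree v, fun _ _ => add_comm _ _⟩ e

/-- The set of edges of `G` whose two endpoints have degrees `i` and `j`. -/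
def edgesOfType [Fintype V] (G : SimpleGraph V) [DecidableRel G.Adj] (i j : ℕ) : Set (Sym2 V) :=
  {e | e ∈ G.edgeSet ∧ ∃ u v, e = s(u, v) ∧ G.degree u = i ∧ G.degree v = j}

/-! Every edge `uv` is covered by exactly the two darts `(u, v)` and `(v, u)`, and every vertex `v`
is the tail of exactly `d(v)` darts; hence `Π₂(G) = ∏_v d(v)^d(v)`, which for the degree
distribution of `CS_n` is `(3^3)^(2n+2) · (6^6)^(n-1)`. -/

namespace SimpleGraph

variable {M : Type*} [CommMonoid M] [Fintype V] (G : SimpleGraph V) [DecidableRel G.Adj]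

theorem prod_dart_fst (f : V → M) : ∏ d : G.Dart, f d.fst = ∏ v, f v ^ G.degree v := by
  classical
  rw [← prod_fiberwise univ (fun d : G.Dart => d.fst)]
  refine prod_congr rfl fun v _ => ?_
  rw [prod_congr rfl fun d hd => congrArg f (mem_filter.mp hd).2, prod_const]
  exact congrArg _ (G.dart_fst_fiber_card_eq_degree v)

theorem prod_dart_fst_eq_prod_edgeFinset (f : V → M) :
    ∏ d : G.Dart, f d.fst =
      ∏ e ∈ G.edgeFinset, Sym2.lift ⟨fun u v => f u * f v, fun _ _ => mul_comm _ _⟩ e := by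
  classical
  rw [← prod_fiberwise_of_maps_to (g := Dart.edge) fun d _ => mem_edgeFinset.mpr d.edge_mem]
  refine prod_congr rfl fun e he => ?_
  induction e using Sym2.ind with
  | _ u v =>
    let d : G.Dart := ⟨(u, v), mem_edgeFinset.mp he⟩
    rw [show s(u, v) = d.edge from rfl, d.edge_fiber, prod_pair d.symm_ne.symm]
    rfl

theorem prod_edgeFinset_lift_mul (f : V → M) :
    ∏ e ∈ G.edgeFinset, Sym2.lift ⟨fun u v => f u * f v, fun _ _ => mul_comm _ _⟩ e =
      ∏ v, f v ^ G.degree v := by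
  rw [← prod_dart_fst_eq_prod_edgeFinset, prod_dart_fst]

theorem mulZagreb2_eq_prod_degree_pow_degree : mulZagreb2 G = ∏ v, G.degree v ^ G.degree v :=
  G.prod_edgeFinset_lift_mul fun v => G.degree v

end SimpleGraph

theorem Finset.prod_comp_of_forall_eq_or_eq {ι κ M : Type*} [CommMonoid M] [DecidableEq κ]
    {s : Finset ι} {g : ι → κ} (f : κ → M) {a b : κ} (hab : a ≠ b)
    (h : ∀ x ∈ s, g x = a ∨ g x = b) :
    ∏ x ∈ s, f (g x) = f a ^ #{x ∈ s | g x = a} * f b ^ #{x ∈ s | g x = b} := by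
  have hnot : {x ∈ s | ¬g x = a} = {x ∈ s | g x = b} :=
    filter_congr fun x hx => by rcases h x hx with hx | hx <;> simp [hx, hab, hab.symm]
  rw [← prod_filter_mul_prod_filter_not s (fun x => g x = a), hnot,
    prod_congr rfl fun x hx => congrArg f (mem_filter.mp hx).2,
    prod_congr rfl fun x hx => congrArg f (mem_filter.mp hx).2, prod_const, prod_const]

theorem chainSilicate_mulZagreb2 (n : ℕ) (hn : 1 ≤ n)
    [Fintype V] (G : SimpleGraph V) [DecidableRel G.Adj]
    (hdeg : ∀ v : V, G.degree v = 3 ∨ G.degree v = 6)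
    (h3 : (Finset.univ.filter fun v : V => G.degree v = 3).card = 2 * n + 2)
    (h6 : (Finset.univ.filter fun v : V => G.degree v = 6).card = n - 1) :
    mulZagreb2 G = 2 ^ (6 * n - 6) * 3 ^ (12 * n) := by
  rw [G.mulZagreb2_eq_prod_degree_pow_degree,
    prod_comp_of_forall_eq_or_eq (fun k => k ^ k) (by norm_num) fun v _ => hdeg v, h3, h6]
  obtain ⟨m, rfl⟩ := Nat.exists_eq_add_of_le' hn
  rw [Nat.add_sub_cancel, show 6 * (m + 1) - 6 = 6 * m by omega,
    show (6 : ℕ) ^ 6 = 2 ^ 6 * 3 ^ 6 by norm_num, mul_pow, ← pow_mul, ← pow_mul, ← pow_mul]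
  ring
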